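/- Let (p_n)_{n≥1} be a guided sequence of polynomials over ℂ: deg p_1 ≥ 1, deg p_n ≥ 2 for n ≥ 2, and with α := limsup_{n→∞} 1/(deg p_n) there exist r > 0 and h : ℂ → ℝ satisfying h(z) − α·log|z| → ∞ as |z| → ∞ such that (i) every zero of every p_n lies in the closed disk of radius r centered at 0, and (ii) there exists N > 1 such that for all n ≥ N and all ζ with |ζ| > r, (1/deg p_n)·log⁺|p_n(ζ)| > h(ζ). Assume additionally that there exists a non-empty open set D ⊆ ℂ such that sup_{n≥1} (1/deg p_n)·log⁺|p_n(z)| < ∞ for every z ∈ D. Then the sequence of functions f_n : ℂ → ℝ defined by f_n(z) := (1/(deg p_n · ⋯ · deg p_1))·log⁺|(p_n ∘ ⋯ ∘ p_1)(z)| converges uniformly on ℂ, i.e. there exists g : ℂ → ℝ such that f_n → g uniformly on ℂ. -/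

import Mathlib

/-!
Write `dₙ` and `aₙ` for the degree and the leading coefficient of `pₙ`. From some `N` on,
`|log ‖aₙ‖| ≤ dₙ Λ`: the lower bound comes from `1 ≤ ‖pₙ ζ‖ ≤ ‖aₙ‖ (‖ζ‖ + r) ^ dₙ` at a point `ζ`
where the guiding function is nonnegative, the upper bound from Cauchy's estimate for `aₙ` on a
disc on which, by Baire's theorem, the functions `log⁺ ‖pₙ‖ / dₙ` are uniformly bounded. As all
zeros lie in the disc of radius `r`, this bounds `|log⁺ ‖pₙ w‖ / dₙ - log⁺ ‖w‖|` uniformly in `w`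
and `n ≥ N`. The increment `fₙ₊₁ z - fₙ z` is that quantity for `pₙ₊₁` at `w = (pₙ ∘ ⋯ ∘ p₁) z`
divided by `d₁ ⋯ dₙ ≥ 2 ^ (n - 1)`, so the sequence is uniformly Cauchy.
-/

open Filter Polynomial

/-- Evaluation of the composition `p_n ∘ ⋯ ∘ p_1` at a point (`p_1` applied first);
for `n = 0` it is the identity. -/
noncomputable def compEval (p : ℕ → Polynomial ℂ) : ℕ → ℂ → ℂ
  | 0, z => z
  | n + 1, z => (p (n + 1)).eval (compEval p n z)

open Metric Real Topology

theorem one_lt_abs_of_lt_mul_posLog {a b x : ℝ} (ha : 0 ≤ a) (h : a < b * log⁺ x) : 1 < |x| := by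
  by_contra hx
  rw [(posLog_eq_zero_iff x).2 (not_lt.1 hx), mul_zero] at h
  exact h.not_ge ha

theorem limsup_one_div_natCast_nonneg (u : ℕ → ℕ) :
    0 ≤ limsup (fun n => (1 : ℝ) / u n) atTop :=
  le_limsup_of_frequently_le (Frequently.of_forall fun n => by positivity)
    (isBoundedUnder_of ⟨1, fun n => by simpa only [one_div] using Nat.cast_inv_le_one (u n)⟩)

theorem exists_lt_norm_nonneg_of_tendsto_sub_mul_log {E : Type*} [NormedAddCommGroup E]
    [NormedSpace ℝ E] [Nontrivial E] {h : E → ℝ} {α : ℝ} (hα : 0 ≤ α)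
    (hh : Tendsto (fun z => h z - α * log ‖z‖) (comap norm atTop) atTop) (r : ℝ) :
    ∃ ζ, r < ‖ζ‖ ∧ 0 ≤ h ζ := by
  rw [comap_norm_atTop] at hh
  obtain ⟨ζ, hζh, hζr⟩ := ((hh.eventually_ge_atTop 0).and
    (tendsto_norm_cobounded_atTop.eventually_gt_atTop (max r 1))).exists
  refine ⟨ζ, (le_max_left _ _).trans_lt hζr, ?_⟩
  have := log_nonneg ((le_max_right r 1).trans hζr.le)
  nlinarith

theorem exists_closedBall_forall_le_of_isOpen {X ι : Type*} [PseudoMetricSpace X]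
    [BaireSpace X] [Countable ι] {u : ι → X → ℝ} (hu : ∀ i, LowerSemicontinuous (u i))
    {D : Set X} (hD : IsOpen D) (hne : D.Nonempty) (hbdd : ∀ z ∈ D, ∃ C, ∀ i, u i z ≤ C) :
    ∃ c, ∃ ρ > 0, ∃ M, ∀ z ∈ closedBall c ρ, ∀ i, u i z ≤ M := by
  -- Adding `Dᶜ` makes the sublevel sets cover `X`, so that Baire's theorem applies in `X`.
  set E : ℕ → Set X := fun m => (⋂ i, u i ⁻¹' Set.Iic (m : ℝ)) ∪ Dᶜ
  have hE_closed (m : ℕ) : IsClosed (E m) :=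
    (isClosed_iInter fun i => (hu i).isClosed_preimage _).union hD.isClosed_compl
  have hE_cover : ⋃ m, E m = Set.univ := by
    refine Set.eq_univ_of_forall fun z => Set.mem_iUnion.2 ?_
    by_cases hz : z ∈ D
    · obtain ⟨C, hC⟩ := hbdd z hz
      exact ⟨⌈C⌉₊, Or.inl <| Set.mem_iInter.2 fun i => (hC i).trans (Nat.le_ceil C)⟩
    · exact ⟨0, Or.inr hz⟩
  obtain ⟨c, hcE, hcD⟩ :=
    (dense_iUnion_interior_of_closed hE_closed hE_cover).exists_mem_open hD hne
  obtain ⟨m, hcm⟩ := Set.mem_iUnion.1 hcE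
  obtain ⟨ρ, hρ, hball⟩ := nhds_basis_closedBall.mem_iff.1
    (inter_mem (isOpen_interior.mem_nhds hcm) (hD.mem_nhds hcD))
  refine ⟨c, ρ, hρ, m, fun z hz i => ?_⟩
  obtain ⟨hzE, hzD⟩ := hball hz
  rcases interior_subset hzE with hz' | hz'
  · exact Set.mem_iInter.1 hz' i
  · exact absurd hzD hz'

theorem exists_tendstoUniformly_of_dist_le_geometric {α β : Type*} [PseudoMetricSpace β]
    [CompleteSpace β] {F : ℕ → α → β} {C r : ℝ} (hr₀ : 0 ≤ r) (hr : r < 1) {N : ℕ}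
    (hF : ∀ n ≥ N, ∀ x, dist (F n x) (F (n + 1) x) ≤ C * r ^ n) :
    ∃ g, TendstoUniformly F g atTop := by
  have hshift (x : α) (k : ℕ) :
      dist (F (N + k) x) (F (N + k + 1) x) ≤ C * r ^ N * r ^ k := by
    rw [mul_assoc, ← pow_add]
    exact hF _ (Nat.le_add_right N k) x
  choose g hg using fun x =>
    cauchySeq_tendsto_of_complete (cauchySeq_of_le_geometric r _ hr (hshift x))
  refine ⟨g, Metric.tendstoUniformly_iff.2 fun ε hε => ?_⟩
  have hbound : Tendsto (fun k : ℕ => C * r ^ N * r ^ k / (1 - r)) atTop (𝓝 0) := by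
    simpa using ((tendsto_pow_atTop_nhds_zero_of_lt_one hr₀ hr).const_mul
      (C * r ^ N)).div_const (1 - r)
  obtain ⟨K, hK⟩ := eventually_atTop.1 (hbound.eventually (gt_mem_nhds hε))
  refine eventually_atTop.2 ⟨N + K, fun n hn x => ?_⟩
  obtain ⟨k, rfl⟩ := Nat.exists_eq_add_of_le (le_trans (Nat.le_add_right N K) hn)
  rw [dist_comm]
  exact (dist_le_of_le_geometric_of_tendsto r _ hr (hshift x) (hg x) k).trans_lt
    (hK k (by omega))

namespace Polynomial

theorem iteratedDeriv_eval {𝕜 : Type*} [NontriviallyNormedField 𝕜] (q : 𝕜[X]) (k : ℕ) :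
    iteratedDeriv k (fun z => q.eval z) = fun z => (derivative^[k] q).eval z := by
  induction k with
  | zero => rfl
  | succ k ih =>
    rw [iteratedDeriv_succ, ih, Function.iterate_succ_apply']
    ext z
    exact Polynomial.deriv _

theorem iterate_derivative_natDegree {R : Type*} [Semiring R] (q : R[X]) :
    derivative^[q.natDegree] q = C (q.natDegree.factorial • q.leadingCoeff) := by
  rw [eq_C_of_natDegree_le_zero ((natDegree_iterate_derivative q _).trans (Nat.sub_self _).le),
    coeff_iterate_derivative, zero_add, Nat.descFactorial_self, leadingCoeff]

section Complex

variable (q : ℂ[X])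

theorem norm_eval_eq_norm_leadingCoeff_mul_prod (w : ℂ) :
    ‖q.eval w‖ = ‖q.leadingCoeff‖ * (q.roots.map fun z => ‖w - z‖).prod := by
  rw [(IsAlgClosed.splits q).eval_eq_prod_roots, norm_mul]
  congr 1
  simpa [Multiset.map_map] using map_multiset_prod (normHom : ℂ →*₀ ℝ) (q.roots.map (w - ·))

theorem norm_eval_le_of_roots_le {r : ℝ} (hroots : ∀ z ∈ q.roots, ‖z‖ ≤ r) (w : ℂ) :
    ‖q.eval w‖ ≤ ‖q.leadingCoeff‖ * (‖w‖ + r) ^ q.natDegree := by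
  rw [norm_eval_eq_norm_leadingCoeff_mul_prod, ← IsAlgClosed.card_roots_eq_natDegree,
    ← Multiset.prod_replicate, ← Multiset.map_const']
  gcongr
  exact Multiset.prod_map_le_prod_map₀ _ _ (fun _ _ => norm_nonneg _)
    fun z hz => (norm_sub_le w z).trans (by linarith [hroots z hz])

theorem le_norm_eval_of_roots_le {r : ℝ} (hroots : ∀ z ∈ q.roots, ‖z‖ ≤ r) {w : ℂ}
    (hw : r ≤ ‖w‖) : ‖q.leadingCoeff‖ * (‖w‖ - r) ^ q.natDegree ≤ ‖q.eval w‖ := by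
  rw [norm_eval_eq_norm_leadingCoeff_mul_prod, ← IsAlgClosed.card_roots_eq_natDegree,
    ← Multiset.prod_replicate, ← Multiset.map_const']
  gcongr
  exact Multiset.prod_map_le_prod_map₀ _ _ (fun _ _ => sub_nonneg.2 hw)
    fun z hz => (norm_sub_norm_le w z).trans' (by linarith [hroots z hz])

theorem norm_leadingCoeff_mul_pow_le {c : ℂ} {ρ C : ℝ} (hρ : 0 < ρ)
    (hC : ∀ z ∈ sphere c ρ, ‖q.eval z‖ ≤ C) :
    ‖q.leadingCoeff‖ * ρ ^ q.natDegree ≤ C := by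
  have hcauchy := Complex.norm_iteratedDeriv_le_of_forall_mem_sphere_norm_le q.natDegree hρ
    q.differentiable.diffContOnCl hC
  rw [iteratedDeriv_eval, iterate_derivative_natDegree] at hcauchy
  beta_reduce at hcauchy
  rwa [eval_C, nsmul_eq_mul, norm_mul, Complex.norm_natCast, mul_div_assoc,
    mul_le_mul_iff_right₀ (by positivity), le_div_iff₀ (by positivity)] at hcauchy

end Complex

theorem neg_mul_log_le_log_norm_leadingCoeff {q : ℂ[X]} {r : ℝ}
    (hroots : ∀ z ∈ q.roots, ‖z‖ ≤ r) {ζ : ℂ} (hζ : 1 ≤ ‖q.eval ζ‖) :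
    -(q.natDegree * log (‖ζ‖ + r)) ≤ log ‖q.leadingCoeff‖ := by
  have hbound := hζ.trans (q.norm_eval_le_of_roots_le hroots ζ)
  have hlog := log_nonneg hbound
  rw [log_mul (left_ne_zero_of_mul (one_pos.trans_le hbound).ne')
    (right_ne_zero_of_mul (one_pos.trans_le hbound).ne'), log_pow] at hlog
  linarith

theorem log_norm_leadingCoeff_le {q : ℂ[X]} (hd : 0 < q.natDegree) {c : ℂ} {ρ M : ℝ}
    (hρ : 0 < ρ) (hM : ∀ z ∈ sphere c ρ, 1 / (q.natDegree : ℝ) * log⁺ ‖q.eval z‖ ≤ M) :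
    log ‖q.leadingCoeff‖ ≤ q.natDegree * (M - log ρ) := by
  have hdpos : 0 < (q.natDegree : ℝ) := Nat.cast_pos.2 hd
  have hcauchy := q.norm_leadingCoeff_mul_pow_le hρ fun z hz => by
    have hMz := hM z hz
    rw [one_div, inv_mul_le_iff₀ hdpos] at hMz
    exact (le_exp_log _).trans (exp_le_exp.2 ((le_max_right _ _).trans hMz))
  have hlc : 0 < ‖q.leadingCoeff‖ :=
    norm_pos_iff.2 (leadingCoeff_ne_zero.2 (ne_zero_of_natDegree_gt hd))
  have hlog := log_le_log (by positivity) hcauchy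
  rw [log_mul hlc.ne' (by positivity), log_pow, log_exp] at hlog
  linarith

theorem abs_log_norm_eval_div_sub_log_le {q : ℂ[X]} {r Λ : ℝ} (hr : 0 ≤ r) (hd : 0 < q.natDegree)
    (hroots : ∀ z ∈ q.roots, ‖z‖ ≤ r) (hlc : |log ‖q.leadingCoeff‖| ≤ q.natDegree * Λ)
    {w : ℂ} (hw₀ : 0 < ‖w‖) (hw : 2 * r ≤ ‖w‖) :
    |log ‖q.eval w‖ / q.natDegree - log ‖w‖| ≤ Λ + log 2 := by
  have hdpos : 0 < (q.natDegree : ℝ) := Nat.cast_pos.2 hd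
  have hlc₀ : 0 < ‖q.leadingCoeff‖ :=
    norm_pos_iff.2 (leadingCoeff_ne_zero.2 (ne_zero_of_natDegree_gt hd))
  have hlow : ‖q.leadingCoeff‖ * (‖w‖ / 2) ^ q.natDegree ≤ ‖q.eval w‖ :=
    (q.le_norm_eval_of_roots_le hroots (by linarith)).trans' (by gcongr; linarith)
  have hup : ‖q.eval w‖ ≤ ‖q.leadingCoeff‖ * (2 * ‖w‖) ^ q.natDegree :=
    (q.norm_eval_le_of_roots_le hroots w).trans (by gcongr; linarith)
  have hlog_low := log_le_log (by positivity) hlow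
  have hlog_up := log_le_log (hlow.trans_lt' (by positivity)) hup
  rw [log_mul hlc₀.ne' (by positivity), log_pow, log_div hw₀.ne' two_ne_zero] at hlog_low
  rw [log_mul hlc₀.ne' (by positivity), log_pow, log_mul two_ne_zero hw₀.ne'] at hlog_up
  obtain ⟨hlc_low, hlc_up⟩ := abs_le.1 hlc
  rw [abs_le, le_sub_iff_add_le, sub_le_iff_le_add, le_div_iff₀ hdpos, div_le_iff₀ hdpos]
  constructor <;> nlinarith

theorem exists_abs_posLog_eval_div_sub_posLog_le {r : ℝ} (hr : 0 ≤ r) (Λ : ℝ) :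
    ∃ C, ∀ q : ℂ[X], 0 < q.natDegree → (∀ z ∈ q.roots, ‖z‖ ≤ r) →
      |log ‖q.leadingCoeff‖| ≤ q.natDegree * Λ →
      ∀ w, |log⁺ ‖q.eval w‖ / q.natDegree - log⁺ ‖w‖| ≤ C := by
  set R := 2 * r + 1
  refine ⟨Λ + log 2 + log (R + r), fun q hd hroots hlc w => ?_⟩
  set d : ℝ := (q.natDegree : ℝ)
  have hdpos : 0 < d := Nat.cast_pos.2 hd
  have hΛ : 0 ≤ Λ := nonneg_of_mul_nonneg_right ((abs_nonneg _).trans hlc) hdpos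
  have hlogRr : log⁺ (R + r) = log (R + r) :=
    posLog_eq_log (by rw [abs_of_nonneg (by positivity)]; linarith)
  have hlogRr₀ : 0 ≤ log (R + r) := hlogRr ▸ posLog_nonneg
  have hlog2 : 0 ≤ log 2 := log_nonneg one_le_two
  by_cases hw : R ≤ ‖w‖
  · have hw₁ : 1 ≤ ‖w‖ := by linarith
    have hfar := abs_log_norm_eval_div_sub_log_le hr hd hroots hlc (by linarith)
      (by linarith : 2 * r ≤ ‖w‖)
    have hw_log : log⁺ ‖w‖ = max (log ‖w‖) 0 := by
      rw [posLog_eq_log (by rwa [abs_norm]), max_eq_left (log_nonneg hw₁)]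
    rw [hw_log, posLog_apply, max_comm, ← max_div_div_right hdpos.le, zero_div]
    calc _ ≤ |log ‖q.eval w‖ / d - log ‖w‖| := abs_max_sub_max_le_abs _ _ _
      _ ≤ _ := by linarith
  · have hlc_pos : log⁺ ‖q.leadingCoeff‖ ≤ d * Λ :=
      max_le (by positivity) ((le_abs_self _).trans hlc)
    have hnear_w : log⁺ ‖w‖ ≤ log (R + r) :=
      hlogRr ▸ posLog_le_posLog (norm_nonneg _) (by linarith)
    have hnear_q : log⁺ ‖q.eval w‖ / d ≤ Λ + log (R + r) := by
      rw [div_le_iff₀' hdpos]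
      calc log⁺ ‖q.eval w‖ ≤ log⁺ (‖q.leadingCoeff‖ * (R + r) ^ q.natDegree) :=
            posLog_le_posLog (norm_nonneg _)
              ((q.norm_eval_le_of_roots_le hroots w).trans (by gcongr; linarith))
        _ ≤ log⁺ ‖q.leadingCoeff‖ + d * log (R + r) := by
            rw [← hlogRr, ← posLog_pow]
            exact posLog_mul
        _ ≤ _ := by linarith
    rw [abs_sub_le_iff]
    constructor <;> linarith [posLog_nonneg (x := ‖w‖),
      div_nonneg (posLog_nonneg (x := ‖q.eval w‖)) hdpos.le]

end Polynomial

theorem two_pow_le_two_mul_prod_Icc {d : ℕ → ℕ} (h1 : 1 ≤ d 1) (h2 : ∀ n ≥ 2, 2 ≤ d n)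
    (n : ℕ) : 2 ^ n ≤ 2 * ∏ i ∈ Finset.Icc 1 n, d i := by
  induction n with
  | zero => simp
  | succ n ih =>
    rw [Finset.prod_Icc_succ_top (by omega), ← mul_assoc, pow_succ]
    rcases Nat.eq_zero_or_pos n with rfl | hn
    · simpa using h1
    · exact Nat.mul_le_mul ih (h2 _ (by omega))

noncomputable def greenApprox (p : ℕ → ℂ[X]) (n : ℕ) (z : ℂ) : ℝ :=
  (1 / ((∏ i ∈ Finset.Icc 1 n, (p i).natDegree : ℕ) : ℝ)) * log⁺ ‖compEval p n z‖

theorem greenApprox_succ_sub (p : ℕ → ℂ[X]) (n : ℕ) (z : ℂ) :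
    greenApprox p (n + 1) z - greenApprox p n z =
      (log⁺ ‖(p (n + 1)).eval (compEval p n z)‖ / (p (n + 1)).natDegree
        - log⁺ ‖compEval p n z‖) / ∏ i ∈ Finset.Icc 1 n, ((p i).natDegree : ℝ) := by
  rw [greenApprox, greenApprox, Finset.prod_Icc_succ_top (by omega), compEval]
  push_cast
  simp only [mul_inv, div_eq_mul_inv]
  ring

theorem dist_greenApprox_succ_le {p : ℕ → ℂ[X]} (hdeg1 : 1 ≤ (p 1).natDegree)
    (hdeg : ∀ n ≥ 2, 2 ≤ (p n).natDegree) {n : ℕ} {C : ℝ}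
    (hC : ∀ w, |log⁺ ‖(p (n + 1)).eval w‖ / (p (n + 1)).natDegree - log⁺ ‖w‖| ≤ C) (z : ℂ) :
    dist (greenApprox p n z) (greenApprox p (n + 1) z) ≤ 2 * C * (1 / 2) ^ n := by
  have hprod : (2 : ℝ) ^ n / 2 ≤ ∏ i ∈ Finset.Icc 1 n, ((p i).natDegree : ℝ) := by
    rw [div_le_iff₀' two_pos]
    exact_mod_cast two_pow_le_two_mul_prod_Icc hdeg1 hdeg n
  rw [dist_comm, Real.dist_eq, greenApprox_succ_sub, abs_div, Finset.abs_prod]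
  simp only [Nat.abs_cast]
  calc _ ≤ C / ∏ i ∈ Finset.Icc 1 n, ((p i).natDegree : ℝ) := by gcongr; exact hC _
    _ ≤ C / (2 ^ n / 2) :=
        div_le_div_of_nonneg_left ((abs_nonneg _).trans (hC 0)) (by positivity) hprod
    _ = 2 * C * (1 / 2) ^ n := by rw [one_div, inv_pow]; field_simp

theorem guided_uniform_convergence
    (p : ℕ → Polynomial ℂ)
    (hdeg1 : 1 ≤ (p 1).natDegree)
    (hdeg : ∀ n ≥ 2, 2 ≤ (p n).natDegree)
    (α : ℝ)
    (hα : α = Filter.limsup (fun n => (1 : ℝ) / ((p n).natDegree : ℝ)) Filter.atTop)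
    (r : ℝ) (hr : 0 < r)
    (h : ℂ → ℝ)
    (hh : Filter.Tendsto (fun z : ℂ => h z - α * Real.log (‖z‖))
      (Filter.comap (fun z : ℂ => ‖z‖) Filter.atTop) Filter.atTop)
    (hzeros : ∀ n ≥ 1, ∀ z : ℂ, (p n).eval z = 0 → ‖z‖ ≤ r)
    (hguided : ∃ N : ℕ, 1 < N ∧ ∀ n ≥ N, ∀ ζ : ℂ, r < ‖ζ‖ →
      h ζ < (1 / ((p n).natDegree : ℝ)) * max 0 (Real.log (‖(p n).eval ζ‖)))
    (D : Set ℂ) (hD : IsOpen D) (hDne : D.Nonempty)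
    (hbdd : ∀ z ∈ D, ∃ C : ℝ, ∀ n ≥ 1,
      (1 / ((p n).natDegree : ℝ)) * max 0 (Real.log (‖(p n).eval z‖)) ≤ C) :
    ∃ g : ℂ → ℝ, TendstoUniformly
      (fun (n : ℕ) (z : ℂ) =>
        (1 / ((∏ i ∈ Finset.Icc 1 n, (p i).natDegree : ℕ) : ℝ)) *
          max 0 (Real.log (‖compEval p n z‖)))
      g Filter.atTop := by
  obtain ⟨N, hN, hguided⟩ := hguided
  have hdeg_pos (n : ℕ) (hn : N ≤ n) : 0 < (p n).natDegree :=
    two_pos.trans_le (hdeg n (by omega))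
  have hroots (n : ℕ) (hn : N ≤ n) : ∀ z ∈ (p n).roots, ‖z‖ ≤ r :=
    fun z hz => hzeros n (by omega) z (mem_roots'.1 hz).2
  obtain ⟨ζ, hζr, hζh⟩ := exists_lt_norm_nonneg_of_tendsto_sub_mul_log
    (hα ▸ limsup_one_div_natCast_nonneg _) hh r
  obtain ⟨c, ρ, hρ, M, hM⟩ := exists_closedBall_forall_le_of_isOpen
    (u := fun (n : {n // N ≤ n}) z => 1 / ((p n).natDegree : ℝ) * log⁺ ‖(p n).eval z‖)
    (fun n => (continuous_const.mul (continuous_posLog.comp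
      (continuous_norm.comp (p n).continuous))).lowerSemicontinuous) hD hDne
    fun z hz => (hbdd z hz).imp fun C hC n => hC n (by have := n.2; omega)
  set Λ := max (log (‖ζ‖ + r)) (M - log ρ)
  have hlc (n : ℕ) (hn : N ≤ n) : |log ‖(p n).leadingCoeff‖| ≤ (p n).natDegree * Λ := by
    refine abs_le.2 ⟨(neg_mul_log_le_log_norm_leadingCoeff (ζ := ζ) (hroots n hn) ?_).trans' ?_,
      (log_norm_leadingCoeff_le (hdeg_pos n hn) hρ
        fun z hz => hM z (sphere_subset_closedBall hz) ⟨n, hn⟩).trans ?_⟩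
    · simpa using (one_lt_abs_of_lt_mul_posLog hζh (hguided n hn ζ hζr)).le
    · gcongr
      exact le_max_left _ _
    · gcongr
      exact le_max_right _ _
  obtain ⟨C, hC⟩ := exists_abs_posLog_eval_div_sub_posLog_le hr.le Λ
  exact exists_tendstoUniformly_of_dist_le_geometric (N := N) (by norm_num : (0 : ℝ) ≤ 1 / 2)
    (by norm_num) fun n hn z => dist_greenApprox_succ_le hdeg1 hdeg
      (hC _ (hdeg_pos _ (by omega)) (hroots _ (by omega)) (hlc _ (by omega))) z
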